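/- Let g : ℝ^d → ℝ ∪ {+∞} be proper, convex, lower semicontinuous and let f : ℝ^d → ℝ be a convex differentiable function whose gradient ∇f is L-Lipschitz. Fix x ∈ ℝ^d, a stepsize α with 0 < α ≤ 1/L, and set x⁺ = prox_{αg}(x − α∇f(x)). Then for every z ∈ ℝ^d with (g+f)(z) ≤ (g+f)(x⁺), one has ‖x⁺ − z‖ ≤ ‖x − z‖. -/

import Mathlib

/-! With `y = x - α ∇f(x)`, minimality of `x⁺` along the segment towards `z` and convexity of `g`
give `⟪y - x⁺, z - x⁺⟫ ≤ α (g z - g x⁺)`. Convexity of `f` at `x` and the descent lemma for the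
`L`-Lipschitz gradient give `⟪∇f(x), z - x⁺⟫ ≤ f z - f x⁺ + (L/2) ‖x⁺ - x‖²`. Adding the two and
using `(g + f)(z) ≤ (g + f)(x⁺)` and `αL ≤ 1` leaves `⟪x - x⁺, z - x⁺⟫ ≤ ‖x - x⁺‖² / 2`, which is
`‖x⁺ - z‖ ≤ ‖x - z‖` once `‖x - z‖² = ‖(x - x⁺) - (z - x⁺)‖²` is expanded. -/

open scoped InnerProductSpace

/-- Convexity for an extended-real-valued function. -/
def ERealConvex {d : ℕ} (g : EuclideanSpace ℝ (Fin d) → EReal) : Prop :=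
  ∀ x y : EuclideanSpace ℝ (Fin d), ∀ a b : ℝ, 0 ≤ a → 0 ≤ b → a + b = 1 →
    g (a • x + b • y) ≤ (a : EReal) * g x + (b : EReal) * g y

/-- `g` is proper: it never takes the value `⊥` and is not identically `⊤`. -/
def ERealProper {d : ℕ} (g : EuclideanSpace ℝ (Fin d) → EReal) : Prop :=
  (∀ x, g x ≠ ⊥) ∧ (∃ x, g x ≠ ⊤)

/-- `p = prox_{αg}(y)`, i.e. `p` minimizes `z ↦ g z + (1/(2α))‖z - y‖²`. -/
def IsProx {d : ℕ} (g : EuclideanSpace ℝ (Fin d) → EReal) (α : ℝ)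
    (y p : EuclideanSpace ℝ (Fin d)) : Prop :=
  ∀ z, g p + ((1 / (2 * α) * ‖p - y‖ ^ 2 : ℝ) : EReal)
      ≤ g z + ((1 / (2 * α) * ‖z - y‖ ^ 2 : ℝ) : EReal)

section

variable {E : Type*} [NormedAddCommGroup E] [InnerProductSpace ℝ E] [CompleteSpace E]

theorem HasGradientAt.hasDerivAt_comp_add_smul {f : E → ℝ} {s x v : E} {t : ℝ}
    (h : HasGradientAt f s (x + t • v)) :
    HasDerivAt (fun t : ℝ => f (x + t • v)) ⟪s, v⟫_ℝ t := by
  have hline : HasDerivAt (fun t : ℝ => x + t • v) v t := by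
    simpa using ((hasDerivAt_id t).smul_const v).const_add x
  have hcomp := h.hasFDerivAt.comp_hasDerivAt t hline
  simp only [InnerProductSpace.toDual_apply_apply] at hcomp
  exact hcomp

theorem ConvexOn.add_inner_le_of_hasGradientAt {f : E → ℝ} {s x : E}
    (hf : ConvexOn ℝ Set.univ f) (h : HasGradientAt f s x) (z : E) :
    f x + ⟪s, z - x⟫_ℝ ≤ f z := by
  have hline : ConvexOn ℝ Set.univ (fun t : ℝ => f (x + t • (z - x))) := by
    simpa [Function.comp_def, AffineMap.lineMap_apply, add_comm] using
      hf.comp_affineMap (AffineMap.lineMap x z)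
  have hderiv := (show HasGradientAt f s (x + (0 : ℝ) • (z - x)) by simpa using h)
    |>.hasDerivAt_comp_add_smul
  have := hline.le_slope_of_hasDerivAt (Set.mem_univ 0) (Set.mem_univ 1) zero_lt_one hderiv
  simp only [slope_def_field, zero_smul, add_zero, one_smul, add_sub_cancel, sub_zero,
    div_one] at this
  linarith

theorem le_add_inner_add_of_lipschitz_gradient {f : E → ℝ} {f' : E → E} {L : ℝ}
    (hf : ∀ p, HasGradientAt f (f' p) p)
    (hlip : ∀ a b, ‖f' a - f' b‖ ≤ L * ‖a - b‖) (x y : E) :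
    f y ≤ f x + ⟪f' x, y - x⟫_ℝ + L / 2 * ‖y - x‖ ^ 2 := by
  set v := y - x
  have hderiv (t : ℝ) : HasDerivAt (fun t : ℝ => f (x + t • v)) ⟪f' (x + t • v), v⟫_ℝ t :=
    (hf _).hasDerivAt_comp_add_smul
  have hB (t : ℝ) : HasDerivAt (fun t : ℝ => f x + t * ⟪f' x, v⟫_ℝ + L / 2 * t ^ 2 * ‖v‖ ^ 2)
      (⟪f' x, v⟫_ℝ + L * t * ‖v‖ ^ 2) t := by
    refine ((((hasDerivAt_id t).mul_const ⟪f' x, v⟫_ℝ).const_add (f x)).add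
      (((hasDerivAt_pow 2 t).const_mul (L / 2)).mul_const (‖v‖ ^ 2))).congr_deriv ?_
    simp only [Nat.cast_ofNat]
    ring
  have hbound (t : ℝ) (ht : t ∈ Set.Ico (0 : ℝ) 1) :
      ⟪f' (x + t • v), v⟫_ℝ ≤ ⟪f' x, v⟫_ℝ + L * t * ‖v‖ ^ 2 := by
    have hlip_t : ‖f' (x + t • v) - f' x‖ ≤ L * t * ‖v‖ := by
      simpa [norm_smul, abs_of_nonneg ht.1, mul_assoc] using hlip (x + t • v) x
    have := real_inner_le_norm (f' (x + t • v) - f' x) v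
    rw [inner_sub_left] at this
    nlinarith [mul_le_mul_of_nonneg_right hlip_t (norm_nonneg v)]
  have := image_le_of_deriv_right_le_deriv_boundary
    (fun t _ => (hderiv t).continuousAt.continuousWithinAt)
    (fun t _ => (hderiv t).hasDerivWithinAt) (by simp)
    (fun t _ => (hB t).continuousAt.continuousWithinAt)
    (fun t _ => (hB t).hasDerivWithinAt) hbound (Set.right_mem_Icc.mpr zero_le_one)
  simpa [v] using this

theorem ConvexOn.add_inner_le_add_of_lipschitz_gradient {f : E → ℝ} {f' : E → E} {L : ℝ}
    (hf : ConvexOn ℝ Set.univ f) (hd : ∀ p, HasGradientAt f (f' p) p)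
    (hlip : ∀ a b, ‖f' a - f' b‖ ≤ L * ‖a - b‖) (x y z : E) :
    f y + ⟪f' x, z - y⟫_ℝ ≤ f z + L / 2 * ‖y - x‖ ^ 2 := by
  have htangent := hf.add_inner_le_of_hasGradientAt (hd x) z
  have hdescent := le_add_inner_add_of_lipschitz_gradient hd hlip x y
  rw [show z - y = (z - x) - (y - x) by abel, inner_sub_right]
  linarith

omit [CompleteSpace E] in
theorem norm_sub_le_norm_sub_of_inner_le {x p z : E}
    (h : ⟪x - p, z - p⟫_ℝ ≤ ‖x - p‖ ^ 2 / 2) : ‖p - z‖ ≤ ‖x - z‖ := by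
  have hsq : ‖x - z‖ ^ 2 = ‖x - p‖ ^ 2 - 2 * ⟪x - p, z - p⟫_ℝ + ‖z - p‖ ^ 2 := by
    rw [← norm_sub_sq_real, sub_sub_sub_cancel_right]
  rw [← pow_le_pow_iff_left₀ (norm_nonneg _) (norm_nonneg _) two_ne_zero, norm_sub_rev p z]
  linarith

end

theorem le_of_forall_mem_Ioc_le_add_mul {a b c : ℝ} (h : ∀ t ∈ Set.Ioc (0 : ℝ) 1, a ≤ b + t * c) :
    a ≤ b := by
  have hlim : Filter.Tendsto (fun t : ℝ => b + t * c) (nhdsWithin 0 (Set.Ioi 0)) (nhds b) := by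
    have : Filter.Tendsto (fun t : ℝ => b + t * c) (nhds 0) (nhds (b + 0 * c)) :=
      (continuous_const.add (continuous_id.mul continuous_const)).tendsto 0
    simpa using this.mono_left nhdsWithin_le_nhds
  exact ge_of_tendsto hlim (Filter.eventually_of_mem (Ioc_mem_nhdsGT zero_lt_one) h)

namespace IsProx

variable {d : ℕ} {g : EuclideanSpace ℝ (Fin d) → EReal} {α : ℝ} {y p : EuclideanSpace ℝ (Fin d)}

theorem ne_top (hg : ERealProper g) (hp : IsProx g α y p) : g p ≠ ⊤ := by
  obtain ⟨w, hw⟩ := hg.2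
  intro htop
  have h := hp w
  rw [htop, EReal.top_add_coe, top_le_iff, ← EReal.coe_toReal hw (hg.1 w), ← EReal.coe_add] at h
  exact EReal.coe_ne_top _ h

/-- Testing the prox inequality against `(1 - t) p + t z` and letting `t → 0⁺`. -/
theorem inner_le (hα : 0 < α) (hg : ERealConvex g) (hp : IsProx g α y p)
    {z : EuclideanSpace ℝ (Fin d)} {a b : ℝ} (ha : g p = a) (hb : g z = b) :
    ⟪y - p, z - p⟫_ℝ ≤ α * (b - a) := by
  suffices h : ∀ t ∈ Set.Ioc (0 : ℝ) 1,
      ⟪y - p, z - p⟫_ℝ ≤ α * (b - a) + t * (‖z - p‖ ^ 2 / 2) from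
    le_of_forall_mem_Ioc_le_add_mul h
  intro t ⟨ht0, ht1⟩
  have hseg : a + 1 / (2 * α) * ‖p - y‖ ^ 2 ≤
      (1 - t) * a + t * b + 1 / (2 * α) * ‖(1 - t) • p + t • z - y‖ ^ 2 := by
    have hconv := hg p z (1 - t) t (by linarith) ht0.le (by ring)
    rw [ha, hb, ← EReal.coe_mul, ← EReal.coe_mul, ← EReal.coe_add] at hconv
    have := (hp ((1 - t) • p + t • z)).trans (add_le_add_left hconv _)
    rwa [ha, ← EReal.coe_add, ← EReal.coe_add, EReal.coe_le_coe_iff] at this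
  have hexpand : ‖(1 - t) • p + t • z - y‖ ^ 2 =
      ‖p - y‖ ^ 2 - 2 * t * ⟪y - p, z - p⟫_ℝ + t ^ 2 * ‖z - p‖ ^ 2 := by
    rw [show (1 - t) • p + t • z - y = (p - y) + t • (z - p) by module, norm_add_sq_real,
      real_inner_smul_right, norm_smul, Real.norm_eq_abs, abs_of_pos ht0, ← neg_sub y p,
      inner_neg_left]
    ring
  rw [hexpand] at hseg
  field_simp at hseg
  nlinarith

end IsProx

theorem proxGrad_distance_decrease_general {d : ℕ} {L : ℝ}
    (g : EuclideanSpace ℝ (Fin d) → EReal)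
    (hg_proper : ERealProper g) (hg_convex : ERealConvex g)
    (f : EuclideanSpace ℝ (Fin d) → ℝ)
    (f' : EuclideanSpace ℝ (Fin d) → EuclideanSpace ℝ (Fin d))
    (hf_convex : ConvexOn ℝ Set.univ f)
    (hf_diff : ∀ y, HasGradientAt f (f' y) y)
    (hf_lip : ∀ x y, ‖f' x - f' y‖ ≤ L * ‖x - y‖)
    (x : EuclideanSpace ℝ (Fin d)) (α : ℝ) (hα : 0 < α) (hαL : α ≤ 1 / L)
    (xp : EuclideanSpace ℝ (Fin d))
    (hxp : IsProx g α (x - α • f' x) xp) :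
    ∀ z : EuclideanSpace ℝ (Fin d),
      g z + (f z : EReal) ≤ g xp + (f xp : EReal) → ‖xp - z‖ ≤ ‖x - z‖ := by
  intro z hz
  have hL : 0 < L := one_div_pos.mp (hα.trans_le hαL)
  have hαL' : α * L ≤ 1 := (le_div_iff₀ hL).mp hαL
  obtain ⟨a, ha⟩ : ∃ a : ℝ, g xp = a :=
    ⟨_, (EReal.coe_toReal (hxp.ne_top hg_proper) (hg_proper.1 xp)).symm⟩
  have hz_top : g z ≠ ⊤ := by
    intro htop
    rw [htop, ha, EReal.top_add_coe, ← EReal.coe_add, top_le_iff] at hz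
    exact EReal.coe_ne_top _ hz
  obtain ⟨b, hb⟩ : ∃ b : ℝ, g z = b := ⟨_, (EReal.coe_toReal hz_top (hg_proper.1 z)).symm⟩
  have hobj : b + f z ≤ a + f xp := by
    rwa [ha, hb, ← EReal.coe_add, ← EReal.coe_add, EReal.coe_le_coe_iff] at hz
  have hprox := hxp.inner_le hα hg_convex ha hb
  rw [sub_right_comm, inner_sub_left, real_inner_smul_left] at hprox
  have hsmooth := hf_convex.add_inner_le_add_of_lipschitz_gradient hf_diff hf_lip x xp z
  apply norm_sub_le_norm_sub_of_inner_le
  rw [norm_sub_rev] at hsmooth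
  nlinarith [mul_le_mul_of_nonneg_left hsmooth hα.le, sq_nonneg ‖x - xp‖]

/-- After a proximal-gradient step `x⁺ = prox_{αg}(x - α∇f(x))` with `0 < α ≤ 1/L`,
every point `z` with objective value at most `(g+f)(x⁺)` satisfies
`‖x⁺ - z‖ ≤ ‖x - z‖`. -/
theorem proxGrad_distance_decrease {d : ℕ} {L : ℝ}
    (g : EuclideanSpace ℝ (Fin d) → EReal)
    (hg_proper : ERealProper g) (hg_convex : ERealConvex g)
    (hg_lsc : LowerSemicontinuous g)
    (f : EuclideanSpace ℝ (Fin d) → ℝ)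
    (f' : EuclideanSpace ℝ (Fin d) → EuclideanSpace ℝ (Fin d))
    (hf_convex : ConvexOn ℝ Set.univ f)
    (hf_diff : ∀ y, HasGradientAt f (f' y) y)
    (hf_lip : ∀ x y, ‖f' x - f' y‖ ≤ L * ‖x - y‖)
    (x : EuclideanSpace ℝ (Fin d)) (α : ℝ) (hα : 0 < α) (hαL : α ≤ 1 / L)
    (xp : EuclideanSpace ℝ (Fin d))
    (hxp : IsProx g α (x - α • f' x) xp) :
    ∀ z : EuclideanSpace ℝ (Fin d),
      g z + (f z : EReal) ≤ g xp + (f xp : EReal) → ‖xp - z‖ ≤ ‖x - z‖ :=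
  proxGrad_distance_decrease_general g hg_proper hg_convex f f' hf_convex hf_diff hf_lip x α hα hαL
    xp hxp
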